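/- arXiv:math/0110248 — 2 statements merged into one kernel-verified Lean document; each statement's English description precedes it below -/
import Mathlib

section
/- Let D be a d-dimensional vector space over a finite field with Q elements, with a partial flag D_0 = 0 ⊂ D_1 ⊂ ⋯ ⊂ D_k = D with dim(D_i/D_{i−1}) = d_i. Given a = (a_1,…,a_k) with 0 ≤ a_i ≤ d_i, the number of subspaces W ⊆ D with dim(W ∩ D_i)/(W ∩ D_{i−1}) = a_i for all i equals ∑_{b ∈ C_a} Q^{∑_{1≤j<i≤d} b_i(1−b_j)}, where C_a is the set of 0-1 vectors b of length d whose sum over positions d_1+⋯+d_{j−1}+1 through d_1+⋯+d_j equals a_j. -/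
/-!
Refine the flag one step at a time. If `H ≤ E` has codimension `c` and `W' ≤ H` has codimension
`δ`, the subspaces `W ≤ E` with `W ∩ H = W'` and `dim W = dim W' + m` number `Q^{mδ} [c, m]_Q`:
choosing a hyperplane `H₁ = H + F x` of `E` over `H`, the space `W ∩ H₁` is either `W'` or one of
the `Q^δ` spaces `W' + F (x + h)` with `h` in a complement of `W'` in `H`, which yields the
`Q`-Pascal recursion of the Gaussian binomial.
Peeling off the last block of the flag, the count becomes
`∏ᵢ Q^{aᵢ ∑_{j<i} (dⱼ - aⱼ)} [dᵢ, aᵢ]_Q`. On the combinatorial side the lexicographic inversion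
statistic of a block word splits into the cross-block pairs, which contribute `aᵢ (dⱼ - aⱼ)`, and
the inversions inside each block, whose generating function is `[dᵢ, aᵢ]_Q`.
-/

open Finset Module Submodule

namespace FlagJumps

def gaussBinom (q : ℕ) : ℕ → ℕ → ℕ
  | 0, 0 => 1
  | 0, _ + 1 => 0
  | c + 1, 0 => gaussBinom q c 0
  | c + 1, m + 1 => q ^ (m + 1) * gaussBinom q c (m + 1) + gaussBinom q c m

theorem gaussBinom_zero_right (q : ℕ) : ∀ c, gaussBinom q c 0 = 1
  | 0 => rfl
  | c + 1 => gaussBinom_zero_right q c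

section Words

variable {n : ℕ}

def ones (b : Fin n → Bool) : ℕ := ∑ s, if b s then 1 else 0

def inversions (b : Fin n → Bool) : ℕ :=
  ∑ s, ∑ t, if t < s then (if b s then 1 else 0) * (if b t then 0 else 1) else 0

theorem card_filter_eq_ones (b : Fin n → Bool) : #{s | b s = true} = ones b := by
  rw [ones, card_filter]

theorem sum_not_eq_sub_ones (b : Fin n → Bool) : ∑ t, (if b t then 0 else 1) = n - ones b := by
  have := sum_filter_add_sum_filter_not univ (fun t => b t = true) fun _ => 1
  simp [ones, sum_ite] at this ⊢
  omega

theorem ones_cons (x : Bool) (b : Fin n → Bool) :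
    ones (Fin.cons x b : Fin (n + 1) → Bool) = (if x then 1 else 0) + ones b := by
  simp only [ones, Fin.sum_univ_succ, Fin.cons_zero, Fin.cons_succ]

theorem inversions_cons (x : Bool) (b : Fin n → Bool) :
    inversions (Fin.cons x b : Fin (n + 1) → Bool) = (if x then 0 else ones b) + inversions b := by
  cases x <;> simp [inversions, ones, Fin.sum_univ_succ, sum_add_distrib]

theorem sum_pow_inversions (q : ℕ) :
    ∀ n m : ℕ, ∑ b : Fin n → Bool with ones b = m, q ^ inversions b = gaussBinom q n m
  | 0, 0 => by simp [gaussBinom, ones, inversions]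
  | 0, m + 1 => by simp [gaussBinom, ones]
  | n + 1, m => by
    rw [sum_filter, ← (Fin.consEquiv fun _ => Bool).sum_comp, Fintype.sum_prod_type,
      Fintype.sum_bool]
    have hcons : ∀ x (y : Fin n → Bool), (Fin.consEquiv fun _ => Bool) (x, y) = Fin.cons x y :=
      fun _ _ => rfl
    have hheadFalse : ∀ m, (∑ b : Fin n → Bool,
        if ones b = m then q ^ (ones b + inversions b) else 0) = q ^ m * gaussBinom q n m := by
      intro m
      rw [← sum_pow_inversions q n m, sum_filter, mul_sum]
      refine sum_congr rfl fun b _ => ?_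
      split_ifs with h <;> simp [h, pow_add]
    simp only [hcons, ones_cons, inversions_cons, if_true, Bool.false_eq_true, if_false, zero_add,
      hheadFalse]
    cases m with
    | zero => simp [gaussBinom]
    | succ m =>
      simp only [gaussBinom, ← sum_pow_inversions q n m, sum_filter, add_comm 1,
        Nat.add_right_cancel_iff]
      ring

end Words

section Blocks

variable {k : ℕ} {dvec : Fin k → ℕ}

theorem sum_blockPair (b : ∀ i, Fin (dvec i) → Bool) (i j : Fin k) :
    ∑ s : Fin (dvec i), ∑ t : Fin (dvec j),
      (if (j : ℕ) < i ∨ ((j : ℕ) = i ∧ (t : ℕ) < s) then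
        (if b i s then 1 else 0) * (if b j t then 0 else 1) else 0) =
      (if j < i then ones (b i) * (dvec j - ones (b j)) else 0) +
        (if j = i then inversions (b i) else 0) := by
  rcases lt_trichotomy j i with h | rfl | h
  · simp only [Fin.val_fin_lt.2 h, true_or, if_true, h, h.ne, if_false, add_zero,
      ← sum_mul_sum, sum_not_eq_sub_ones, ones]
  · simp [inversions]
  · simp [h.ne', lt_asymm h, lt_asymm (Fin.val_fin_lt.2 h), (Fin.val_fin_lt.2 h).ne']

theorem lexExponent_eq (b : ∀ i, Fin (dvec i) → Bool) (a : Fin k → ℕ)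
    (hb : ∀ i, ones (b i) = a i) :
    ∑ i : Fin k, ∑ s : Fin (dvec i), ∑ j : Fin k, ∑ t : Fin (dvec j),
      (if (j : ℕ) < i ∨ ((j : ℕ) = i ∧ (t : ℕ) < s) then
        (if b i s then 1 else 0) * (if b j t then 0 else 1) else 0) =
      ∑ i, (a i * ∑ j ∈ Iio i, (dvec j - a j) + inversions (b i)) := by
  refine sum_congr rfl fun i _ => ?_
  rw [sum_comm, sum_congr rfl fun j _ => sum_blockPair b i j]
  simp [sum_add_distrib, hb, ← sum_filter, mul_sum, filter_gt_eq_Iio]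

theorem sum_pow_lexExponent (q : ℕ) (a : Fin k → ℕ) :
    ∑ b ∈ univ.filter (fun b : ∀ i : Fin k, Fin (dvec i) → Bool =>
        ∀ i, (univ.filter (fun s => b i s = true)).card = a i),
      q ^ (∑ i : Fin k, ∑ s : Fin (dvec i), ∑ j : Fin k, ∑ t : Fin (dvec j),
        if ((j : ℕ) < (i : ℕ) ∨ ((j : ℕ) = (i : ℕ) ∧ (t : ℕ) < (s : ℕ))) then
          (if b i s then 1 else 0) * (if b j t then 0 else 1) else 0) =
      ∏ i, q ^ (a i * ∑ j ∈ Iio i, (dvec j - a j)) * gaussBinom q (dvec i) (a i) := by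
  have hfilter : univ.filter (fun b : ∀ i : Fin k, Fin (dvec i) → Bool =>
        ∀ i, (univ.filter (fun s => b i s = true)).card = a i) =
      Fintype.piFinset fun i => {β | ones β = a i} := by
    ext b; simp [card_filter_eq_ones, Fintype.mem_piFinset]
  rw [hfilter]
  calc _ = ∑ b ∈ Fintype.piFinset fun i => {β | ones β = a i},
        ∏ i, q ^ (a i * ∑ j ∈ Iio i, (dvec j - a j)) * q ^ inversions (b i) :=
        sum_congr rfl fun b hb => by
          rw [lexExponent_eq b a fun i => by simpa using Fintype.mem_piFinset.1 hb i,
            ← prod_pow_eq_pow_sum]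
          simp_rw [pow_add]
    _ = ∏ i, ∑ β ∈ {β : Fin (dvec i) → Bool | ones β = a i},
          q ^ (a i * ∑ j ∈ Iio i, (dvec j - a j)) * q ^ inversions β := by
        rw [prod_univ_sum]
    _ = _ := by simp_rw [← mul_sum, sum_pow_inversions]

end Blocks

section Fibers

variable {α β : Type*}

theorem card_subtype_eq_sum_card_fiber [Finite α] [Fintype β] (P : α → Prop) (f : α → β) :
    Nat.card {x // P x} = ∑ y, Nat.card {x // P x ∧ f x = y} := by
  rw [← Nat.card_sigma]
  exact Nat.card_congr ((Equiv.sigmaFiberEquiv fun x : {x // P x} => f x).symm.trans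
    (Equiv.sigmaCongrRight fun y => Equiv.subtypeSubtypeEquivSubtypeInter P (f · = y)))

theorem sum_ite_eq_card_mul [Fintype β] (R : β → Prop) [DecidablePred R] (n : ℕ) :
    ∑ y, (if R y then n else 0) = Nat.card {y // R y} * n := by
  rw [← sum_filter, sum_const, smul_eq_mul, Nat.card_eq_fintype_card, Fintype.card_subtype]

end Fibers

instance instFiniteSubmodule {R M : Type*} [Semiring R] [Finite R] [AddCommMonoid M]
    [Module R M] [Module.Finite R M] : Finite (Submodule R M) :=
  have : Finite M := Module.finite_of_finite R
  Finite.of_injective _ SetLike.coe_injective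

section Transverse

variable {F D : Type*} [DivisionRing F] [AddCommGroup D] [Module F D]

def IsTransverseExt (E H W' : Submodule F D) (m : ℕ) (W : Submodule F D) : Prop :=
  W ≤ E ∧ W ⊓ H = W' ∧ finrank F W = finrank F W' + m

variable {E H H₁ W' W₁ W : Submodule F D}

theorem isTransverseExt_and_inf_eq_iff {m j : ℕ} (hHH₁ : H ≤ H₁) (hW₁ : W₁ ⊓ H = W')
    (hrank : finrank F W₁ = finrank F W' + j) :
    IsTransverseExt E H W' (m + j) W ∧ W ⊓ H₁ = W₁ ↔ IsTransverseExt E H₁ W₁ m W := by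
  constructor
  · rintro ⟨⟨hWE, -, hW⟩, hWH₁⟩
    exact ⟨hWE, hWH₁, by omega⟩
  · rintro ⟨hWE, hWH₁, hW⟩
    exact ⟨⟨hWE, by rw [← hW₁, ← hWH₁, inf_assoc, inf_of_le_right hHH₁], by omega⟩, hWH₁⟩

theorem sup_span_singleton_inf_eq {v : D} (hW'H : W' ≤ H) (hvH : v ∉ H) :
    (W' ⊔ span F {v}) ⊓ H = W' := by
  rw [sup_inf_assoc_of_le _ hW'H, inf_comm, (disjoint_span_singleton_of_notMem hvH).eq_bot,
    sup_bot_eq]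

theorem sub_mem_of_sup_span_eq {x c₁ c₂ : D} (hW'H : W' ≤ H) (hxH : x ∉ H) (hc₁ : c₁ ∈ H)
    (hc₂ : c₂ ∈ H) (h : W' ⊔ span F {x + c₁} = W' ⊔ span F {x + c₂}) : c₁ - c₂ ∈ W' := by
  have hx₂ : x + c₂ ∉ H := fun hx => hxH (by simpa using H.sub_mem hx hc₂)
  have hmem : c₁ - c₂ ∈ (W' ⊔ span F {x + c₂}) ⊓ H := by
    refine ⟨?_, H.sub_mem hc₁ hc₂⟩
    rw [← add_sub_add_left_eq_sub _ _ x]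
    exact sub_mem (h ▸ mem_sup_right (mem_span_singleton_self _))
      (mem_sup_right (mem_span_singleton_self _))
  rwa [sup_span_singleton_inf_eq hW'H hx₂] at hmem

variable [FiniteDimensional F D]

theorem isTransverseExt_sup_span {v : D} (hW'H : W' ≤ H) (hW'E : W' ≤ E) (hvE : v ∈ E)
    (hvH : v ∉ H) : IsTransverseExt E H W' 1 (W' ⊔ span F {v}) :=
  ⟨sup_le hW'E ((span_singleton_le_iff_mem _ _).2 hvE), sup_span_singleton_inf_eq hW'H hvH,
    finrank_sup_span_singleton fun h => hvH (hW'H h)⟩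

theorem card_isTransverseExt_zero (hW'H : W' ≤ H) (hW'E : W' ≤ E) :
    Nat.card {W // IsTransverseExt E H W' 0 W} = 1 := by
  rw [Nat.card_eq_one_iff_exists]
  refine ⟨⟨W', hW'E, inf_of_le_left hW'H, rfl⟩, fun ⟨W, _, hWH, hW⟩ => Subtype.ext ?_⟩
  exact (eq_of_le_of_finrank_eq (hWH ▸ inf_le_left : W' ≤ W) hW.symm).symm

theorem exists_eq_sup_span_of_isTransverseExt {C : Submodule F D} {x : D} (hsup : W' ⊔ C = H)
    (hHH₁ : H ≤ H₁) (hH₁ : finrank F H₁ = finrank F H + 1) (hxH₁ : x ∈ H₁) (hxH : x ∉ H)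
    (hW : IsTransverseExt H₁ H W' 1 W) : ∃ c ∈ C, W' ⊔ span F {x + c} = W := by
  obtain ⟨hWH₁, hWH, hW⟩ := hW
  have hW'W : W' ≤ W := hWH ▸ inf_le_left
  have hsupW : W ⊔ H = H₁ := by
    refine eq_of_le_of_finrank_eq (sup_le hWH₁ hHH₁) ?_
    have := finrank_sup_add_finrank_inf_eq W H
    rw [hWH] at this
    omega
  obtain ⟨w, hw, h, hh, rfl⟩ := mem_sup.1 (hsupW ▸ hxH₁)
  obtain ⟨w', hw', c, hc, hwc⟩ := mem_sup.1 (hsup ▸ H.neg_mem hh)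
  have hxc : w + h + c ∈ W := by
    rw [show w + h + c = w - w' by rw [eq_sub_of_add_eq' hwc]; abel]
    exact W.sub_mem hw (hW'W hw')
  have hxcH : w + h + c ∉ H := fun hmem =>
    hxH (by simpa using H.sub_mem hmem (hsup.le (mem_sup_right hc)))
  refine ⟨c, hc, eq_of_le_of_finrank_eq (sup_le hW'W ((span_singleton_le_iff_mem _ _).2 hxc)) ?_⟩
  rw [finrank_sup_span_singleton fun hm => hxcH (hsup.le (mem_sup_left hm)), hW]

theorem card_isTransverseExt_one [Finite F] {δ : ℕ} (hHH₁ : H ≤ H₁)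
    (hH₁ : finrank F H₁ = finrank F H + 1) (hW'H : W' ≤ H) (hδ : finrank F H = finrank F W' + δ) :
    Nat.card {W // IsTransverseExt H₁ H W' 1 W} = Nat.card F ^ δ := by
  obtain ⟨x, hxH₁, hxH⟩ := SetLike.exists_of_lt (lt_of_le_of_ne hHH₁ (by rintro rfl; omega))
  obtain ⟨C₀, hC₀⟩ := Submodule.exists_isCompl W'
  set C := C₀ ⊓ H
  have hdisj : W' ⊓ C = ⊥ := (hC₀.disjoint.mono_right inf_le_left).eq_bot
  have hsup : W' ⊔ C = H := by
    rw [← sup_inf_assoc_of_le _ hW'H, hC₀.sup_eq_top, top_inf_eq]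
  have hC : finrank F C = δ := by
    have := finrank_sup_add_finrank_inf_eq W' C
    rw [hsup, hdisj, finrank_bot] at this
    omega
  let f : C → {W // IsTransverseExt H₁ H W' 1 W} := fun c =>
    ⟨_, isTransverseExt_sup_span hW'H (hW'H.trans hHH₁) (H₁.add_mem hxH₁ (hHH₁ c.2.2))
      fun h => hxH (by simpa using H.sub_mem h c.2.2)⟩
  have hinj : Function.Injective f := fun c₁ c₂ h => by
    have := sub_mem_of_sup_span_eq hW'H hxH c₁.2.2 c₂.2.2 (congrArg Subtype.val h)
    have : (c₁ : D) - c₂ ∈ W' ⊓ C := ⟨this, C.sub_mem c₁.2 c₂.2⟩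
    rw [hdisj, mem_bot, sub_eq_zero] at this
    exact Subtype.ext this
  have hsurj : Function.Surjective f := fun W => by
    obtain ⟨c, hc, hcW⟩ := exists_eq_sup_span_of_isTransverseExt hsup hHH₁ hH₁ hxH₁ hxH W.2
    exact ⟨⟨c, hc⟩, Subtype.ext hcW⟩
  rw [← Nat.card_eq_of_bijective f ⟨hinj, hsurj⟩, Module.natCard_eq_pow_finrank (K := F), hC]

theorem inf_isTransverseExt {m : ℕ} (hHH₁ : H ≤ H₁) (hH₁ : finrank F H₁ = finrank F H + 1)
    (hW : IsTransverseExt E H W' m W) :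
    W ⊓ H₁ = W' ∨ IsTransverseExt H₁ H W' 1 (W ⊓ H₁) := by
  have hinf : W ⊓ H₁ ⊓ H = W' := by rw [inf_assoc, inf_of_le_right hHH₁, hW.2.1]
  have hle : W' ≤ W ⊓ H₁ := hinf ▸ inf_le_left
  have hrank : finrank F ↥(W ⊓ H₁) ≤ finrank F W' + 1 := by
    have := finrank_sup_add_finrank_inf_eq (W ⊓ H₁) H
    rw [hinf] at this
    have := finrank_mono (sup_le inf_le_right hHH₁ : W ⊓ H₁ ⊔ H ≤ H₁)
    omega
  rcases (finrank_mono hle).eq_or_lt with h | h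
  · exact .inl (eq_of_le_of_finrank_eq hle h).symm
  · exact .inr ⟨inf_le_right, hinf, by omega⟩

open Classical in
theorem card_isTransverseExt_and_inf_eq {m : ℕ} (hW'H : W' ≤ H) (hHH₁ : H ≤ H₁)
    (hH₁ : finrank F H₁ = finrank F H + 1) (W₁ : Submodule F D) :
    Nat.card {W // IsTransverseExt E H W' (m + 1) W ∧ W ⊓ H₁ = W₁} =
      (if W₁ = W' then Nat.card {W // IsTransverseExt E H₁ W' (m + 1) W} else 0) +
        (if IsTransverseExt H₁ H W' 1 W₁ then Nat.card {W // IsTransverseExt E H₁ W₁ m W}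
          else 0) := by
  by_cases h₀ : W₁ = W'
  · subst h₀
    have : ¬IsTransverseExt H₁ H W₁ 1 W₁ := fun h => by have := h.2.2; omega
    rw [if_pos rfl, if_neg this, add_zero]
    exact Nat.card_congr (Equiv.subtypeEquivRight fun W =>
      isTransverseExt_and_inf_eq_iff (j := 0) hHH₁ (inf_of_le_left hW'H) rfl)
  by_cases h₁ : IsTransverseExt H₁ H W' 1 W₁
  · rw [if_neg h₀, if_pos h₁, zero_add]
    exact Nat.card_congr (Equiv.subtypeEquivRight fun W =>
      isTransverseExt_and_inf_eq_iff hHH₁ h₁.2.1 h₁.2.2)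
  · rw [if_neg h₀, if_neg h₁, add_zero, Nat.card_eq_zero]
    exact .inl ⟨fun ⟨W, hW, hWH₁⟩ => (inf_isTransverseExt hHH₁ hH₁ hW).elim
      (fun h => h₀ (hWH₁ ▸ h)) (fun h => h₁ (hWH₁ ▸ h))⟩

theorem card_isTransverseExt [Finite F] {c δ : ℕ} (m : ℕ) (hHE : H ≤ E) (hW'H : W' ≤ H)
    (hc : finrank F E = finrank F H + c) (hδ : finrank F H = finrank F W' + δ) :
    Nat.card {W // IsTransverseExt E H W' m W} =
      Nat.card F ^ (m * δ) * gaussBinom (Nat.card F) c m := by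
  classical
  have := Fintype.ofFinite (Submodule F D)
  induction c generalizing H W' m δ with
  | zero =>
    obtain rfl : H = E := eq_of_le_of_finrank_eq hHE (by omega)
    rcases m with _ | m
    · rw [card_isTransverseExt_zero hW'H (hW'H.trans hHE), gaussBinom_zero_right]; simp
    · refine (Nat.card_eq_zero.2 (.inl ⟨fun ⟨W, hWH, hWH', hW⟩ => ?_⟩)).trans (by simp [gaussBinom])
      rw [inf_of_le_left hWH] at hWH'
      subst hWH'
      omega
  | succ c ih =>
    rcases m with _ | m
    · rw [card_isTransverseExt_zero hW'H (hW'H.trans hHE), gaussBinom_zero_right]; simp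
    obtain ⟨x, hxE, hxH⟩ := SetLike.exists_of_lt (lt_of_le_of_ne hHE (by rintro rfl; omega))
    set H₁ := H ⊔ span F {x}
    have hH₁ : finrank F H₁ = finrank F H + 1 := finrank_sup_span_singleton hxH
    have hHH₁ : H ≤ H₁ := le_sup_left
    have hH₁E : H₁ ≤ E := sup_le hHE ((span_singleton_le_iff_mem _ _).2 hxE)
    have hstep : ∀ W₁, (if IsTransverseExt H₁ H W' 1 W₁ then
          Nat.card {W // IsTransverseExt E H₁ W₁ m W} else 0) =
        if IsTransverseExt H₁ H W' 1 W₁ then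
          Nat.card F ^ (m * δ) * gaussBinom (Nat.card F) c m else 0 := by
      intro W₁
      split_ifs with h₁
      · exact ih m hH₁E h₁.1 (by omega) (by have := h₁.2.2; omega)
      · rfl
    rw [card_subtype_eq_sum_card_fiber _ (· ⊓ H₁), sum_congr rfl fun W₁ _ => card_isTransverseExt_and_inf_eq hW'H hHH₁ hH₁ W₁,
      sum_add_distrib, sum_ite_eq', if_pos (mem_univ _), sum_congr rfl fun W₁ _ => hstep W₁,
      sum_ite_eq_card_mul, ih (δ := δ + 1) (m + 1) hH₁E (hW'H.trans hHH₁) (by omega) (by omega),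
      card_isTransverseExt_one hHH₁ hH₁ hW'H hδ, gaussBinom]
    ring

end Transverse

theorem last_eq_sum_of_succ_eq_add {M : Type*} [AddCommMonoid M] :
    ∀ {k : ℕ} (f : Fin (k + 1) → M) (v : Fin k → M), f 0 = 0 →
      (∀ i, f i.succ = f i.castSucc + v i) → f (Fin.last k) = ∑ i, v i
  | 0, _, _, h0, _ => h0
  | k + 1, f, v, h0, h => by
    rw [Fin.sum_univ_castSucc, ← Fin.succ_last, h, ← last_eq_sum_of_succ_eq_add
      (fun i => f i.castSucc) (fun i => v i.castSucc) h0 fun i => by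
        rw [← Fin.succ_castSucc]; exact h i.castSucc]

section Flags

variable {F D : Type*} [DivisionRing F] [AddCommGroup D] [Module F D]

def HasJumps {k : ℕ} (Dfl : Fin (k + 1) → Submodule F D) (a : Fin k → ℕ)
    (W : Submodule F D) : Prop :=
  ∀ i : Fin k, finrank F ↥(W ⊓ Dfl i.succ) = finrank F ↥(W ⊓ Dfl i.castSucc) + a i

theorem hasJumps_succ_iff {k : ℕ} {Dfl : Fin (k + 1 + 1) → Submodule F D} (hmono : Monotone Dfl)
    {a : Fin (k + 1) → ℕ} {W : Submodule F D} :
    HasJumps Dfl a W ↔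
      HasJumps (fun i => Dfl i.castSucc) (fun i => a i.castSucc)
          (W ⊓ Dfl (Fin.last k).castSucc) ∧
        finrank F ↥(W ⊓ Dfl (Fin.last (k + 1))) =
          finrank F ↥(W ⊓ Dfl (Fin.last k).castSucc) + a (Fin.last k) := by
  have hcut : ∀ j : Fin (k + 1), finrank F ↥(W ⊓ Dfl (Fin.last k).castSucc ⊓ Dfl j.castSucc) =
      finrank F ↥(W ⊓ Dfl j.castSucc) := fun j => by
    rw [inf_assoc, inf_of_le_right (hmono (Fin.castSucc_le_castSucc_iff.2 (Fin.le_last j)))]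
  simp only [HasJumps, Fin.forall_fin_succ' (n := k), hcut, Fin.succ_castSucc, Fin.succ_last]

variable [Finite F] [FiniteDimensional F D]

open Classical in
theorem card_hasJumps_and_inf_eq {k : ℕ} {dvec a : Fin (k + 1) → ℕ}
    {Dfl : Fin (k + 1 + 1) → Submodule F D} (hmono : Monotone Dfl) (h0 : Dfl 0 = ⊥)
    (hjump : ∀ i, finrank F (Dfl i.succ) = finrank F (Dfl i.castSucc) + dvec i)
    (ha : ∀ i, a i ≤ dvec i) (W₀ : Submodule F D) :
    Nat.card {W // (W ≤ Dfl (Fin.last (k + 1)) ∧ HasJumps Dfl a W) ∧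
        W ⊓ Dfl (Fin.last k).castSucc = W₀} =
      if W₀ ≤ Dfl (Fin.last k).castSucc ∧
          HasJumps (fun i => Dfl i.castSucc) (fun i => a i.castSucc) W₀ then
        Nat.card F ^ (a (Fin.last k) * ∑ j : Fin k, (dvec j.castSucc - a j.castSucc)) *
          gaussBinom (Nat.card F) (dvec (Fin.last k)) (a (Fin.last k))
      else 0 := by
  set Dk := Dfl (Fin.last k).castSucc
  split_ifs with hW₀
  · have hDk : finrank F Dk = ∑ j : Fin k, dvec j.castSucc :=
      last_eq_sum_of_succ_eq_add (fun i => finrank F (Dfl i.castSucc)) _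
        (by rw [Fin.castSucc_zero, h0, finrank_bot]) fun i => by
          rw [← Fin.succ_castSucc]; exact hjump i.castSucc
    have hW₀rank : finrank F W₀ = ∑ j : Fin k, a j.castSucc := by
      rw [← inf_of_le_left hW₀.1]
      exact last_eq_sum_of_succ_eq_add (fun i => finrank F ↥(W₀ ⊓ Dfl i.castSucc)) _
        (by rw [Fin.castSucc_zero, h0, inf_bot_eq, finrank_bot]) hW₀.2
    have hδ : finrank F Dk = finrank F W₀ + ∑ j : Fin k, (dvec j.castSucc - a j.castSucc) := by
      rw [hDk, hW₀rank, ← sum_add_distrib]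
      exact sum_congr rfl fun j _ => (Nat.add_sub_cancel' (ha j.castSucc)).symm
    have hiff : ∀ W, (W ≤ Dfl (Fin.last (k + 1)) ∧ HasJumps Dfl a W) ∧ W ⊓ Dk = W₀ ↔
        IsTransverseExt (Dfl (Fin.last (k + 1))) Dk W₀ (a (Fin.last k)) W := by
      intro W
      rw [hasJumps_succ_iff hmono]
      constructor
      · rintro ⟨⟨hWl, -, hrank⟩, rfl⟩
        exact ⟨hWl, rfl, by rwa [inf_of_le_left hWl] at hrank⟩
      · rintro ⟨hWl, rfl, hrank⟩
        exact ⟨⟨hWl, hW₀.2, by rwa [inf_of_le_left hWl]⟩, rfl⟩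
    rw [Nat.card_congr (Equiv.subtypeEquivRight hiff)]
    exact card_isTransverseExt _ (hmono (Fin.le_last _)) hW₀.1
      (by rw [← hjump, Fin.succ_last]) hδ
  · exact Nat.card_eq_zero.2 (.inl ⟨fun ⟨W, ⟨_, hW⟩, hWk⟩ =>
      hW₀ ⟨hWk ▸ inf_le_right, hWk ▸ ((hasJumps_succ_iff hmono).1 hW).1⟩⟩)

theorem card_hasJumps : ∀ {k : ℕ} (dvec a : Fin k → ℕ) (Dfl : Fin (k + 1) → Submodule F D),
    Monotone Dfl → Dfl 0 = ⊥ →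
    (∀ i : Fin k, finrank F (Dfl i.succ) = finrank F (Dfl i.castSucc) + dvec i) →
    (∀ i, a i ≤ dvec i) →
    Nat.card {W // W ≤ Dfl (Fin.last k) ∧ HasJumps Dfl a W} =
      ∏ i, Nat.card F ^ (a i * ∑ j ∈ Iio i, (dvec j - a j)) * gaussBinom (Nat.card F) (dvec i) (a i)
  | 0, _, _, Dfl, _, h0, _, _ => by
    rw [Fin.prod_univ_zero, Nat.card_eq_one_iff_exists]
    refine ⟨⟨⊥, bot_le, fun i => i.elim0⟩, fun ⟨W, hW, _⟩ => ?_⟩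
    rw [Subtype.mk.injEq, ← le_bot_iff]
    exact h0 ▸ hW
  | k + 1, dvec, a, Dfl, hmono, h0, hjump, ha => by
    classical
    have := Fintype.ofFinite (Submodule F D)
    rw [card_subtype_eq_sum_card_fiber _ (· ⊓ Dfl (Fin.last k).castSucc),
      sum_congr rfl fun W₀ _ => card_hasJumps_and_inf_eq hmono h0 hjump ha W₀,
      sum_ite_eq_card_mul, card_hasJumps (fun i => dvec i.castSucc) (fun i => a i.castSucc)
        (fun i => Dfl i.castSucc) (fun i j hij => hmono (Fin.castSucc_le_castSucc_iff.2 hij)) h0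
        (fun i => by rw [← Fin.succ_castSucc]; exact hjump i.castSucc) fun i => ha i.castSucc,
      Fin.prod_univ_castSucc]
    simp [← Fin.map_castSuccEmb_Iio, Fin.Iio_last_eq_map]

end Flags

end FlagJumps

theorem stmt_11_general (F : Type*) [Field F] [Fintype F] (Q : ℕ) (hQ : Fintype.card F = Q)
    (k : ℕ) (dvec : Fin k → ℕ)
    (D : Type*) [AddCommGroup D] [Module F D] [FiniteDimensional F D]
    (Dfl : Fin (k + 1) → Submodule F D) (hmono : Monotone Dfl)
    (h0 : Dfl 0 = ⊥) (htop : Dfl (Fin.last k) = ⊤)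
    (hjump : ∀ i : Fin k,
      Module.finrank F (Dfl i.succ) = Module.finrank F (Dfl i.castSucc) + dvec i)
    (a : Fin k → ℕ) (ha : ∀ i, a i ≤ dvec i) :
    Nat.card {W : Submodule F D // ∀ i : Fin k,
        Module.finrank F ↥(W ⊓ Dfl i.succ) = Module.finrank F ↥(W ⊓ Dfl i.castSucc) + a i} =
      ∑ b ∈ Finset.univ.filter (fun b : ∀ i : Fin k, Fin (dvec i) → Bool =>
          ∀ i, (Finset.univ.filter (fun s => b i s = true)).card = a i),
        Q ^ (∑ i : Fin k, ∑ s : Fin (dvec i), ∑ j : Fin k, ∑ t : Fin (dvec j),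
          if ((j : ℕ) < (i : ℕ) ∨ ((j : ℕ) = (i : ℕ) ∧ (t : ℕ) < (s : ℕ))) then
            (if b i s then 1 else 0) * (if b j t then 0 else 1) else 0) := by
  rw [FlagJumps.sum_pow_lexExponent, ← hQ, ← Nat.card_eq_fintype_card,
    ← FlagJumps.card_hasJumps dvec a Dfl hmono h0 hjump ha, htop]
  exact Nat.card_congr (Equiv.subtypeEquivRight fun W => (and_iff_right le_top).symm)

/-- Let `D` be a `d`-dimensional vector space over a finite field with `Q` elements,
with a partial flag `0 = D₀ ⊂ D₁ ⊂ ⋯ ⊂ D_k = D`, `dim(D_i/D_{i-1}) = d_i`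
(so `d = d₁ + ⋯ + d_k`).  Given `a` with `0 ≤ a_i ≤ d_i`, the number of subspaces
`W ⊆ D` with `dim(W ∩ D_i)/(W ∩ D_{i-1}) = a_i` for all `i` equals
`∑_{b ∈ C_a} Q^{∑_{(j,t) < (i,s)} b_{i,s}(1 - b_{j,t})}`, where `C_a` is the set of
0-1 vectors of length `d` (indexed here by pairs `(i, s)` with `i` a block and `s` a
position in block `i`, ordered lexicographically) whose sum over block `j` is `a_j`. -/
theorem stmt_11 (F : Type*) [Field F] [Fintype F] (Q : ℕ) (hQ : Fintype.card F = Q)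
    (k d : ℕ) (dvec : Fin k → ℕ) (hd : ∑ i, dvec i = d)
    (D : Type*) [AddCommGroup D] [Module F D] [FiniteDimensional F D]
    (hD : Module.finrank F D = d)
    (Dfl : Fin (k + 1) → Submodule F D) (hmono : Monotone Dfl)
    (h0 : Dfl 0 = ⊥) (htop : Dfl (Fin.last k) = ⊤)
    (hjump : ∀ i : Fin k,
      Module.finrank F (Dfl i.succ) = Module.finrank F (Dfl i.castSucc) + dvec i)
    (a : Fin k → ℕ) (ha : ∀ i, a i ≤ dvec i) :
    Nat.card {W : Submodule F D // ∀ i : Fin k,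
        Module.finrank F ↥(W ⊓ Dfl i.succ) = Module.finrank F ↥(W ⊓ Dfl i.castSucc) + a i} =
      ∑ b ∈ Finset.univ.filter (fun b : ∀ i : Fin k, Fin (dvec i) → Bool =>
          ∀ i, (Finset.univ.filter (fun s => b i s = true)).card = a i),
        Q ^ (∑ i : Fin k, ∑ s : Fin (dvec i), ∑ j : Fin k, ∑ t : Fin (dvec j),
          if ((j : ℕ) < (i : ℕ) ∨ ((j : ℕ) = (i : ℕ) ∧ (t : ℕ) < (s : ℕ))) then
            (if b i s then 1 else 0) * (if b j t then 0 else 1) else 0) :=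
  stmt_11_general F Q hQ k dvec D Dfl hmono h0 htop hjump a ha
end

section
/- Let D be a d-dimensional vector space over a field, with a partial flag D_0 = 0 ⊂ D_1 ⊂ ⋯ ⊂ D_k = D, and let W ⊆ D be a subspace. The set F_1 = {t ∈ End D : t(D_i) ⊆ D_{i−1} for all i, im t ⊆ W ⊆ ker t} is a linear subspace of End D of dimension ∑_{i<j} w_i (d_j − w_j), where w_i = dim(W∩D_i) − dim(W∩D_{i−1}) and d_j = dim D_j − dim D_{j−1}. -/
/-!
Choose complements `U j` of `D_{j-1} + (W ∩ D_j)` in `D_j`, so that `dim U j = d_j - w_j` and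
`D = W ⊕ U 1 ⊕ ⋯ ⊕ U k`. An endomorphism lies in `F₁` exactly when it kills `W` and maps each
`U j` into `W ∩ D_{j-1}`. A linear map on an internal direct sum is an arbitrary family of maps
on the summands, so `F₁ ≅ ∏ j, Hom(U j, W ∩ D_{j-1})`, of dimension
`∑ j, (d_j - w_j) * ∑ i < j, w_i`.
-/

open Module DirectSum

theorem LinearMap.ext_of_iSup_eq_top {R M N ι : Type*} [Semiring R] [AddCommMonoid M]
    [Module R M] [AddCommMonoid N] [Module R N] {C : ι → Submodule R M} (hC : ⨆ i, C i = ⊤)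
    {f g : M →ₗ[R] N} (h : ∀ i, ∀ x ∈ C i, f x = g x) : f = g := by
  suffices ⊤ ≤ LinearMap.eqLocus f g from LinearMap.ext fun x => this Submodule.mem_top
  rw [← hC]
  exact iSup_le fun i x hx => h i x hx

theorem DirectSum.isInternal_of_iSup_eq_top_of_sum_finrank_eq {K M ι : Type*} [DivisionRing K]
    [AddCommGroup M] [Module K M] [FiniteDimensional K M] [Fintype ι] [DecidableEq ι]
    {C : ι → Submodule K M} (hsup : ⨆ i, C i = ⊤)
    (hrank : ∑ i, finrank K (C i) = finrank K M) : IsInternal C := by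
  have hsurj : Function.Surjective (coeLinearMap C) := by
    rw [← LinearMap.range_eq_top, range_coeLinearMap, hsup]
  have hdim : finrank K (⨁ i, C i) = finrank K M := by
    rw [(linearEquivFunOnFintype K ι fun i => C i).finrank_eq, Module.finrank_pi_fintype, hrank]
  exact ⟨(LinearMap.injective_iff_surjective_of_finrank_eq_finrank hdim).mpr hsurj, hsurj⟩

namespace DirectSum.IsInternal

variable {R M N ι : Type*} [CommSemiring R] [AddCommMonoid M] [Module R M] [AddCommMonoid N]
  [Module R N] [DecidableEq ι] {C : ι → Submodule R M}

-- The `show` keeps `LinearEquiv.ofBijective_symm_apply_apply` usable under reducible transparency.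
noncomputable def lift (hC : IsInternal C) : (∀ i, C i →ₗ[R] N) →ₗ[R] M →ₗ[R] N :=
  LinearMap.lcomp R N (LinearEquiv.ofBijective (coeLinearMap C)
      (show Function.Bijective _ from hC)).symm.toLinearMap ∘ₗ
    (DFinsupp.lsum R).toLinearMap

theorem lift_apply_coe (hC : IsInternal C) (f : ∀ i, C i →ₗ[R] N) {i : ι} (x : C i) :
    hC.lift f x = f i x := by
  rw [← coeLinearMap_of C i x]
  simp only [lift, LinearMap.comp_apply, LinearMap.lcomp_apply, LinearEquiv.coe_coe,
    LinearEquiv.ofBijective_symm_apply_apply]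
  exact DFinsupp.lsum_single R f i x

end DirectSum.IsInternal

theorem DirectSum.IsInternal.finrank_iInf_compatibleMaps {K M N ι : Type*} [Field K]
    [AddCommGroup M] [Module K M] [FiniteDimensional K M] [AddCommGroup N] [Module K N]
    [FiniteDimensional K N] [Fintype ι] [DecidableEq ι] {C : ι → Submodule K M}
    (hC : IsInternal C) (B : ι → Submodule K N) :
    finrank K ↥(⨅ i, Submodule.compatibleMaps (C i) (B i)) =
      ∑ i, finrank K (C i) * finrank K (B i) := by
  set Ψ := hC.lift ∘ₗ LinearMap.piMap fun i => (B i).subtype.compRight K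
  have hΨ : ∀ f i (x : C i), Ψ f x = f i x := fun f i x => hC.lift_apply_coe _ x
  have hinj : Function.Injective Ψ := fun f g hfg => by
    funext i
    ext x
    rw [← hΨ, ← hΨ, hfg]
  have hrange : LinearMap.range Ψ = ⨅ i, Submodule.compatibleMaps (C i) (B i) := by
    ext t
    simp only [LinearMap.mem_range, Submodule.mem_iInf]
    constructor
    · rintro ⟨f, rfl⟩ i x hx
      simp only [Submodule.mem_comap, hΨ f i ⟨x, hx⟩, SetLike.coe_mem]
    · intro ht
      refine ⟨fun i => t.restrict (ht i),
        LinearMap.ext_of_iSup_eq_top hC.submodule_iSup_eq_top fun i x hx => ?_⟩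
      rw [hΨ _ i ⟨x, hx⟩]
      rfl
  rw [← hrange, LinearMap.finrank_range_of_inj hinj, Module.finrank_pi_fintype]
  simp only [Module.finrank_linearMap]

theorem Fin.eq_add_sum_of_succ_eq_add {M : Type*} [AddCommMonoid M] {k : ℕ}
    {f : Fin (k + 1) → M} {a : Fin k → M} (h : ∀ i, f i.succ = f i.castSucc + a i)
    (m : Fin (k + 1)) : f m = f 0 + ∑ i, if i.castSucc < m then a i else 0 := by
  induction m using Fin.induction with
  | zero => simp
  | succ j ih =>
    have hsplit : ∀ i : Fin k, (if i.castSucc < j.succ then a i else 0) =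
        (if i.castSucc < j.castSucc then a i else 0) + if i = j then a i else 0 := by
      intro i
      simp only [Fin.castSucc_lt_succ_iff, Fin.castSucc_lt_castSucc_iff]
      rcases lt_trichotomy i j with hij | rfl | hij
      · simp [hij, hij.le, hij.ne]
      · simp
      · simp [not_le.mpr hij, not_lt.mpr hij.le, hij.ne']
    rw [h, ih, Finset.sum_congr rfl fun i _ => hsplit i, Finset.sum_add_distrib,
      Finset.sum_ite_eq' Finset.univ j a, if_pos (Finset.mem_univ j), add_assoc]

theorem Submodule.finrank_add_finrank_inf_add_finrank_eq {K M : Type*} [DivisionRing K]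
    [AddCommGroup M] [Module K M] [FiniteDimensional K M] {p q W U : Submodule K M} (hpq : p ≤ q)
    (hdisj : Disjoint (p ⊔ W ⊓ q) U) (hsup : p ⊔ W ⊓ q ⊔ U = q) :
    finrank K p + finrank K ↥(W ⊓ q) + finrank K U = finrank K q + finrank K ↥(W ⊓ p) := by
  have hpWq : p ⊓ (W ⊓ q) = W ⊓ p := by rw [inf_left_comm, inf_eq_left.mpr hpq, inf_comm]
  have h₁ := Submodule.finrank_sup_add_finrank_inf_eq p (W ⊓ q)
  have h₂ := Submodule.finrank_sup_add_finrank_inf_eq (p ⊔ W ⊓ q) U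
  rw [hpWq] at h₁
  rw [hsup, hdisj.eq_bot, finrank_bot, add_zero] at h₂
  omega

section Flag

variable {R D : Type*} [CommRing R] [AddCommGroup D] [Module R D] {k : ℕ}
  {Dfl : Fin (k + 1) → Submodule R D} {W : Submodule R D} {U : Fin k → Submodule R D}

theorem flag_le_iSup_cons (h0 : Dfl 0 = ⊥)
    (hU : ∀ j, Dfl j.castSucc ⊔ W ⊓ Dfl j.succ ⊔ U j = Dfl j.succ) (m : Fin (k + 1)) :
    Dfl m ≤ ⨆ m', (Fin.cons W U : Fin (k + 1) → Submodule R D) m' := by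
  induction m using Fin.induction with
  | zero => simp [h0]
  | succ j ih =>
    rw [← hU j]
    exact sup_le (sup_le ih (inf_le_left.trans (le_iSup_of_le 0 le_rfl)))
      (le_iSup_of_le j.succ le_rfl)

theorem map_flag_succ_le_of_map_le
    (hU : ∀ j, Dfl j.castSucc ⊔ W ⊓ Dfl j.succ ⊔ U j = Dfl j.succ)
    {t : Module.End R D} (hW : W ≤ LinearMap.ker t)
    (ht : ∀ j, (U j).map t ≤ W ⊓ Dfl j.castSucc) {i : Fin k}
    (hi : (Dfl i.castSucc).map t ≤ W ⊓ Dfl i.castSucc) :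
    (Dfl i.succ).map t ≤ W ⊓ Dfl i.castSucc := by
  have hWt : (W ⊓ Dfl i.succ).map t = ⊥ := LinearMap.le_ker_iff_map.mp (inf_le_left.trans hW)
  rw [← hU i, Submodule.map_sup, Submodule.map_sup, hWt, sup_bot_eq]
  exact sup_le hi (ht i)

theorem map_flag_le (h0 : Dfl 0 = ⊥)
    (hU : ∀ j, Dfl j.castSucc ⊔ W ⊓ Dfl j.succ ⊔ U j = Dfl j.succ)
    {t : Module.End R D} (hW : W ≤ LinearMap.ker t)
    (ht : ∀ j, (U j).map t ≤ W ⊓ Dfl j.castSucc) (m : Fin (k + 1)) :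
    (Dfl m).map t ≤ W ⊓ Dfl m := by
  induction m using Fin.induction with
  | zero => simp [h0]
  | succ j ih =>
    have hmono : Dfl j.castSucc ≤ Dfl j.succ := hU j ▸ le_sup_left.trans le_sup_left
    exact (map_flag_succ_le_of_map_le hU hW ht ih).trans (inf_le_inf_left W hmono)

theorem mem_iInf_compatibleMaps_cons_iff (h0 : Dfl 0 = ⊥) (htop : Dfl (Fin.last k) = ⊤)
    (hU : ∀ j, Dfl j.castSucc ⊔ W ⊓ Dfl j.succ ⊔ U j = Dfl j.succ) (t : Module.End R D) :
    t ∈ ⨅ m, Submodule.compatibleMaps ((Fin.cons W U : Fin (k + 1) → Submodule R D) m)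
        ((Fin.cons ⊥ fun j => W ⊓ Dfl j.castSucc : Fin (k + 1) → Submodule R D) m) ↔
      (∀ i : Fin k, (Dfl i.succ).map t ≤ Dfl i.castSucc) ∧
        LinearMap.range t ≤ W ∧ W ≤ LinearMap.ker t := by
  have hcons : t ∈ ⨅ m, Submodule.compatibleMaps
        ((Fin.cons W U : Fin (k + 1) → Submodule R D) m)
        ((Fin.cons ⊥ fun j => W ⊓ Dfl j.castSucc : Fin (k + 1) → Submodule R D) m) ↔
      W ≤ LinearMap.ker t ∧ ∀ j, (U j).map t ≤ W ⊓ Dfl j.castSucc := by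
    simp only [Submodule.mem_iInf, Fin.forall_fin_succ, Fin.cons_zero, Fin.cons_succ,
      Submodule.map_le_iff_le_comap]
    rfl
  rw [hcons]
  constructor
  · rintro ⟨hW, ht⟩
    refine ⟨fun i => ?_, ?_, hW⟩
    · exact (map_flag_succ_le_of_map_le hU hW ht (map_flag_le h0 hU hW ht _)).trans inf_le_right
    · rw [LinearMap.range_eq_map, ← htop]
      exact (map_flag_le h0 hU hW ht _).trans inf_le_left
  · rintro ⟨hflag, hrange, hW⟩
    refine ⟨hW, fun j => le_inf (LinearMap.map_le_range.trans hrange) ?_⟩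
    exact (Submodule.map_mono (hU j ▸ le_sup_right)).trans (hflag j)

end Flag

section FiniteDimensional

variable {K D : Type*} [Field K] [AddCommGroup D] [Module K D] {k : ℕ}
  {Dfl : Fin (k + 1) → Submodule K D} {W : Submodule K D} {dvec wvec : Fin k → ℕ}

theorem exists_flag_complements [FiniteDimensional K D] (hmono : Monotone Dfl)
    (hdvec : ∀ i, finrank K (Dfl i.succ) = finrank K (Dfl i.castSucc) + dvec i)
    (hwvec : ∀ i, finrank K ↥(W ⊓ Dfl i.succ) = finrank K ↥(W ⊓ Dfl i.castSucc) + wvec i) :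
    ∃ U : Fin k → Submodule K D, (∀ j, Dfl j.castSucc ⊔ W ⊓ Dfl j.succ ⊔ U j = Dfl j.succ) ∧
      ∀ j, finrank K (U j) + wvec j = dvec j := by
  have hsucc (j : Fin k) : Dfl j.castSucc ≤ Dfl j.succ := hmono j.castSucc_le_succ
  choose U hUdisj hUsup using fun j =>
    IsModularLattice.exists_disjoint_and_sup_eq (sup_le (hsucc j) (inf_le_right (a := W)))
  refine ⟨U, hUsup, fun j => ?_⟩
  have := Submodule.finrank_add_finrank_inf_add_finrank_eq (hsucc j) (hUdisj j) (hUsup j)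
  rw [hdvec, hwvec] at this
  omega

theorem finrank_inf_flag_eq_sum (h0 : Dfl 0 = ⊥)
    (hwvec : ∀ i, finrank K ↥(W ⊓ Dfl i.succ) = finrank K ↥(W ⊓ Dfl i.castSucc) + wvec i)
    (m : Fin (k + 1)) :
    finrank K ↥(W ⊓ Dfl m) = ∑ i, if i.castSucc < m then wvec i else 0 := by
  have := Fin.eq_add_sum_of_succ_eq_add (f := fun m => finrank K ↥(W ⊓ Dfl m)) hwvec m
  rwa [h0, inf_bot_eq, finrank_bot, zero_add] at this

theorem isInternal_cons_flag_complements [FiniteDimensional K D] {U : Fin k → Submodule K D}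
    (h0 : Dfl 0 = ⊥) (htop : Dfl (Fin.last k) = ⊤)
    (hU : ∀ j, Dfl j.castSucc ⊔ W ⊓ Dfl j.succ ⊔ U j = Dfl j.succ)
    (hdvec : ∀ i, finrank K (Dfl i.succ) = finrank K (Dfl i.castSucc) + dvec i)
    (hwvec : ∀ i, finrank K ↥(W ⊓ Dfl i.succ) = finrank K ↥(W ⊓ Dfl i.castSucc) + wvec i)
    (hUrank : ∀ j, finrank K (U j) + wvec j = dvec j) :
    IsInternal (Fin.cons W U : Fin (k + 1) → Submodule K D) := by
  refine isInternal_of_iSup_eq_top_of_sum_finrank_eq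
    (top_unique (htop ▸ flag_le_iSup_cons h0 hU _)) ?_
  have hW : finrank K W = ∑ j, wvec j := by
    have := finrank_inf_flag_eq_sum h0 hwvec (Fin.last k)
    simp only [Fin.castSucc_lt_last, if_true] at this
    rwa [htop, inf_top_eq] at this
  have hD : finrank K D = ∑ j, dvec j := by
    have := Fin.eq_add_sum_of_succ_eq_add (f := fun m => finrank K (Dfl m)) hdvec (Fin.last k)
    simp only [Fin.castSucc_lt_last, if_true] at this
    rwa [h0, htop, finrank_bot, finrank_top, zero_add] at this
  rw [Fin.sum_univ_succ, Fin.cons_zero, hW, hD, ← Finset.sum_add_distrib]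
  exact Finset.sum_congr rfl fun j _ => by rw [Fin.cons_succ, ← hUrank j, add_comm]

end FiniteDimensional

theorem stmt_19_general (K : Type*) [Field K] (D : Type*) [AddCommGroup D] [Module K D]
    [FiniteDimensional K D] (k : ℕ)
    (Dfl : Fin (k + 1) → Submodule K D) (hmono : Monotone Dfl)
    (h0 : Dfl 0 = ⊥) (htop : Dfl (Fin.last k) = ⊤)
    (W : Submodule K D)
    (dvec wvec : Fin k → ℕ)
    (hdvec : ∀ i : Fin k,
      Module.finrank K (Dfl i.succ) = Module.finrank K (Dfl i.castSucc) + dvec i)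
    (hwvec : ∀ i : Fin k,
      Module.finrank K ↥(W ⊓ Dfl i.succ) = Module.finrank K ↥(W ⊓ Dfl i.castSucc) + wvec i) :
    ∃ S : Submodule K (Module.End K D),
      (∀ t : Module.End K D, t ∈ S ↔
        (∀ i : Fin k, (Dfl i.succ).map t ≤ Dfl i.castSucc) ∧
          LinearMap.range t ≤ W ∧ W ≤ LinearMap.ker t) ∧
      Module.finrank K S =
        ∑ i : Fin k, ∑ j : Fin k, if i < j then wvec i * (dvec j - wvec j) else 0 := by
  obtain ⟨U, hU, hUrank⟩ := exists_flag_complements hmono hdvec hwvec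
  have hC := isInternal_cons_flag_complements h0 htop hU hdvec hwvec hUrank
  refine ⟨_, mem_iInf_compatibleMaps_cons_iff h0 htop hU, ?_⟩
  rw [hC.finrank_iInf_compatibleMaps, Fin.sum_univ_succ, Finset.sum_comm, Fin.cons_zero,
    Fin.cons_zero, finrank_bot, mul_zero, zero_add]
  refine Finset.sum_congr rfl fun j _ => ?_
  rw [Fin.cons_succ, Fin.cons_succ, finrank_inf_flag_eq_sum h0 hwvec, Finset.mul_sum]
  refine Finset.sum_congr rfl fun i _ => ?_
  simp only [Fin.castSucc_lt_castSucc_iff, ← hUrank j, Nat.add_sub_cancel]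
  split_ifs <;> ring

/-- Let `D` be a `d`-dimensional vector space with a partial flag
`0 = D₀ ⊆ D₁ ⊆ ⋯ ⊆ D_k = D` and `W ⊆ D` a subspace.  The set
`F₁ = {t ∈ End D : t(D_i) ⊆ D_{i-1} for all i, im t ⊆ W ⊆ ker t}` is a linear
subspace of `End D` of dimension `∑_{i<j} w_i (d_j - w_j)`, where
`w_i = dim(W ∩ D_i) - dim(W ∩ D_{i-1})` and `d_j = dim D_j - dim D_{j-1}`. -/
theorem stmt_19 (K : Type*) [Field K] (D : Type*) [AddCommGroup D] [Module K D]
    [FiniteDimensional K D] (k d : ℕ) (hD : Module.finrank K D = d)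
    (Dfl : Fin (k + 1) → Submodule K D) (hmono : Monotone Dfl)
    (h0 : Dfl 0 = ⊥) (htop : Dfl (Fin.last k) = ⊤)
    (W : Submodule K D)
    (dvec wvec : Fin k → ℕ)
    (hdvec : ∀ i : Fin k,
      Module.finrank K (Dfl i.succ) = Module.finrank K (Dfl i.castSucc) + dvec i)
    (hwvec : ∀ i : Fin k,
      Module.finrank K ↥(W ⊓ Dfl i.succ) = Module.finrank K ↥(W ⊓ Dfl i.castSucc) + wvec i) :
    ∃ S : Submodule K (Module.End K D),
      (∀ t : Module.End K D, t ∈ S ↔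
        (∀ i : Fin k, (Dfl i.succ).map t ≤ Dfl i.castSucc) ∧
          LinearMap.range t ≤ W ∧ W ≤ LinearMap.ker t) ∧
      Module.finrank K S =
        ∑ i : Fin k, ∑ j : Fin k, if i < j then wvec i * (dvec j - wvec j) else 0 :=
  stmt_19_general K D k Dfl hmono h0 htop W dvec wvec hdvec hwvec
end
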